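/- arXiv:2603.29001 — 7 statements merged into one kernel-verified Lean document; each statement's English description precedes it below -/
import Mathlib

section
/- Let A, B ∈ ℝ^{N×s} have full column rank, with thin QR decompositions A = Q_A R_A and B = Q_B R_B, and let Q_Aᵀ Q_B = U Σ Vᵀ be a singular value decomposition with U, V ∈ ℝ^{s×s} orthogonal and Σ = diag(σ_1,…,σ_s). Then the consistency matrix satisfies the similarity identity I_s − (A†B)(B†A) = (R_A⁻¹ U) (I_s − Σ²) (R_A⁻¹ U)⁻¹. -/
/-! Writing `A = Q_A R_A` turns `R_A⁻¹ Q_Aᵀ` into a matrix satisfying the Penrose conditions, so by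
uniqueness `A† = R_A⁻¹ Q_Aᵀ`, and likewise for `B`. Hence `(A†B)(B†A) = R_A⁻¹ (Q_AᵀQ_B)(Q_AᵀQ_B)ᵀ R_A`,
and the SVD gives `(Q_AᵀQ_B)(Q_AᵀQ_B)ᵀ = U Σ² Uᵀ` with `Uᵀ = U⁻¹`. -/

open Matrix

/-- The four Penrose conditions characterizing the Moore–Penrose pseudoinverse `Md` of `M`. -/
def IsMoorePenrose {N s : ℕ} (M : Matrix (Fin N) (Fin s) ℝ)
    (Md : Matrix (Fin s) (Fin N) ℝ) : Prop :=
  M * Md * M = M ∧ Md * M * Md = Md ∧ (M * Md)ᵀ = M * Md ∧ (Md * M)ᵀ = Md * M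

namespace IsMoorePenrose

variable {N s : ℕ} {M : Matrix (Fin N) (Fin s) ℝ}

theorem unique {X Y : Matrix (Fin s) (Fin N) ℝ}
    (hX : IsMoorePenrose M X) (hY : IsMoorePenrose M Y) : X = Y := by
  obtain ⟨hX1, hX2, hX3, hX4⟩ := hX
  obtain ⟨hY1, hY2, hY3, hY4⟩ := hY
  have hMX : M * X = M * Y :=
    calc M * X = (M * Y) * (M * X) := by rw [← Matrix.mul_assoc, hY1]
      _ = ((M * X) * (M * Y))ᵀ := by rw [transpose_mul, hX3, hY3]
      _ = M * Y := by rw [← Matrix.mul_assoc, hX1, hY3]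
  have hXM : X * M = Y * M :=
    calc X * M = (X * M) * (Y * M) := by rw [Matrix.mul_assoc, ← Matrix.mul_assoc M, hY1]
      _ = ((Y * M) * (X * M))ᵀ := by rw [transpose_mul, hX4, hY4]
      _ = Y * M := by rw [Matrix.mul_assoc, ← Matrix.mul_assoc M, hX1, hY4]
  calc X = X * M * X := hX2.symm
    _ = Y * M * Y := by rw [Matrix.mul_assoc, hMX, ← Matrix.mul_assoc, hXM]
    _ = Y := hY2

theorem of_eq_mul {Q : Matrix (Fin N) (Fin s) ℝ} {R : Matrix (Fin s) (Fin s) ℝ}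
    (hM : M = Q * R) (hQ : Qᵀ * Q = 1) (hR : IsUnit R.det) :
    IsMoorePenrose M (R⁻¹ * Qᵀ) := by
  have hleft : R⁻¹ * Qᵀ * M = 1 := by
    rw [hM, Matrix.mul_assoc, ← Matrix.mul_assoc Qᵀ, hQ, Matrix.one_mul, nonsing_inv_mul R hR]
  have hproj : M * (R⁻¹ * Qᵀ) = Q * Qᵀ := by
    rw [hM, Matrix.mul_assoc, ← Matrix.mul_assoc R, mul_nonsing_inv R hR, Matrix.one_mul]
  refine ⟨?_, ?_, ?_, ?_⟩
  · rw [Matrix.mul_assoc, hleft, Matrix.mul_one]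
  · rw [hleft, Matrix.one_mul]
  · rw [hproj, transpose_mul, transpose_transpose]
  · rw [hleft, transpose_one]

theorem eq_of_eq_mul {Md : Matrix (Fin s) (Fin N) ℝ} {Q : Matrix (Fin N) (Fin s) ℝ}
    {R : Matrix (Fin s) (Fin s) ℝ} (hMd : IsMoorePenrose M Md)
    (hM : M = Q * R) (hQ : Qᵀ * Q = 1) (hR : IsUnit R.det) : Md = R⁻¹ * Qᵀ :=
  hMd.unique (of_eq_mul hM hQ hR)

end IsMoorePenrose

section

variable {n R : Type*} [Fintype n] [DecidableEq n] [CommRing R]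

theorem svd_mul_transpose_self {U S V : Matrix n n R} (hV : Vᵀ * V = 1) :
    (U * S * Vᵀ) * (U * S * Vᵀ)ᵀ = U * (S * Sᵀ) * Uᵀ := by
  simp only [transpose_mul, transpose_transpose, Matrix.mul_assoc]
  rw [← Matrix.mul_assoc Vᵀ, hV, Matrix.one_mul]

theorem mul_one_sub_mul_of_mul_eq_one {P P' : Matrix n n R} (hP : P * P' = 1) (D : Matrix n n R) :
    P * (1 - D) * P' = 1 - P * D * P' := by
  rw [Matrix.mul_sub, Matrix.sub_mul, Matrix.mul_one, hP]

end

theorem pinv_mul_mul_pinv_mul_of_qr {N s : ℕ} {A B QA QB : Matrix (Fin N) (Fin s) ℝ}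
    {RA RB : Matrix (Fin s) (Fin s) ℝ} {Adag Bdag : Matrix (Fin s) (Fin N) ℝ}
    (hAdag : IsMoorePenrose A Adag) (hBdag : IsMoorePenrose B Bdag)
    (hAQR : A = QA * RA) (hQA : QAᵀ * QA = 1) (hRA : IsUnit RA.det)
    (hBQR : B = QB * RB) (hQB : QBᵀ * QB = 1) (hRB : IsUnit RB.det) :
    (Adag * B) * (Bdag * A) = RA⁻¹ * ((QAᵀ * QB) * (QAᵀ * QB)ᵀ) * RA := by
  rw [hAdag.eq_of_eq_mul hAQR hQA hRA, hBdag.eq_of_eq_mul hBQR hQB hRB, hAQR, hBQR,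
    transpose_mul, transpose_transpose]
  simp only [Matrix.mul_assoc]
  rw [← Matrix.mul_assoc RB, mul_nonsing_inv RB hRB, Matrix.one_mul]

theorem stmt_0_general {N s : ℕ}
    (A B QA QB : Matrix (Fin N) (Fin s) ℝ)
    (RA RB U V Sig : Matrix (Fin s) (Fin s) ℝ)
    (σ : Fin s → ℝ)
    (Adag Bdag : Matrix (Fin s) (Fin N) ℝ)
    -- thin QR decomposition of A
    (hAQR : A = QA * RA) (hQA : QAᵀ * QA = 1)
    (hRAunit : IsUnit RA.det)
    -- thin QR decomposition of B
    (hBQR : B = QB * RB) (hQB : QBᵀ * QB = 1)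
    (hRBunit : IsUnit RB.det)
    -- SVD of Q_Aᵀ Q_B with U, V orthogonal and Σ = diag(σ₁,…,σ_s), σ₁ ≥ … ≥ σ_s ≥ 0
    (hUorth' : U * Uᵀ = 1)
    (hVorth : Vᵀ * V = 1)
    (hSig : Sig = Matrix.diagonal σ)
    (hSVD : QAᵀ * QB = U * Sig * Vᵀ)
    -- Moore–Penrose pseudoinverses of A and B
    (hAdag : IsMoorePenrose A Adag) (hBdag : IsMoorePenrose B Bdag) :
    (1 : Matrix (Fin s) (Fin s) ℝ) - (Adag * B) * (Bdag * A)
      = (RA⁻¹ * U) * (1 - Sig ^ 2) * (RA⁻¹ * U)⁻¹ := by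
  have hSigSq : Sig * Sigᵀ = Sig ^ 2 := by rw [hSig, diagonal_transpose, sq]
  have hP : RA⁻¹ * U * (Uᵀ * RA) = 1 := by
    rw [Matrix.mul_assoc, ← Matrix.mul_assoc U, hUorth', Matrix.one_mul, nonsing_inv_mul RA hRAunit]
  rw [pinv_mul_mul_pinv_mul_of_qr hAdag hBdag hAQR hQA hRAunit hBQR hQB hRBunit, hSVD,
    svd_mul_transpose_self hVorth, hSigSq, inv_eq_right_inv hP, mul_one_sub_mul_of_mul_eq_one hP]
  simp only [Matrix.mul_assoc]

/-- If `A = Q_A R_A`, `B = Q_B R_B` are thin QR decompositions of the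
full-column-rank matrices `A, B ∈ ℝ^{N×s}` and `Q_Aᵀ Q_B = U Σ Vᵀ` is an SVD, then the
consistency matrix satisfies
`I − (A†B)(B†A) = (R_A⁻¹ U)(I − Σ²)(R_A⁻¹ U)⁻¹`. -/
theorem stmt_0 {N s : ℕ}
    (A B QA QB : Matrix (Fin N) (Fin s) ℝ)
    (RA RB U V Sig : Matrix (Fin s) (Fin s) ℝ)
    (σ : Fin s → ℝ)
    (Adag Bdag : Matrix (Fin s) (Fin N) ℝ)
    -- full column rank
    (hArank : A.rank = s) (hBrank : B.rank = s)
    -- thin QR decomposition of A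
    (hAQR : A = QA * RA) (hQA : QAᵀ * QA = 1)
    (hRAtri : RA.BlockTriangular id) (hRAunit : IsUnit RA.det)
    -- thin QR decomposition of B
    (hBQR : B = QB * RB) (hQB : QBᵀ * QB = 1)
    (hRBtri : RB.BlockTriangular id) (hRBunit : IsUnit RB.det)
    -- SVD of Q_Aᵀ Q_B with U, V orthogonal and Σ = diag(σ₁,…,σ_s), σ₁ ≥ … ≥ σ_s ≥ 0
    (hUorth : Uᵀ * U = 1) (hUorth' : U * Uᵀ = 1)
    (hVorth : Vᵀ * V = 1) (hVorth' : V * Vᵀ = 1)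
    (hSig : Sig = Matrix.diagonal σ)
    (hσdec : Antitone σ) (hσnonneg : ∀ i, 0 ≤ σ i)
    (hSVD : QAᵀ * QB = U * Sig * Vᵀ)
    -- Moore–Penrose pseudoinverses of A and B
    (hAdag : IsMoorePenrose A Adag) (hBdag : IsMoorePenrose B Bdag) :
    (1 : Matrix (Fin s) (Fin s) ℝ) - (Adag * B) * (Bdag * A)
      = (RA⁻¹ * U) * (1 - Sig ^ 2) * (RA⁻¹ * U)⁻¹ :=
  stmt_0_general A B QA QB RA RB U V Sig σ Adag Bdag hAQR hQA hRAunit hBQR hQB hRBunit hUorth'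
    hVorth hSig hSVD hAdag hBdag
end

section
/- Let A, B ∈ ℝ^{N×s} have full column rank, with thin QR decompositions A = Q_A R_A and B = Q_B R_B, and let σ_1 ≥ … ≥ σ_s ≥ 0 be the singular values of Q_Aᵀ Q_B. Then the characteristic polynomial of the consistency matrix M_c = I_s − (A†B)(B†A) equals ∏_{i=1}^{s} (X − (1 − σ_i²)); in particular, the eigenvalues of M_c, with multiplicity, are exactly 1 − σ_i² for i = 1,…,s. -/
/-!
By uniqueness of the Moore–Penrose pseudoinverse, the QR factors give `A† = R_A⁻¹ Q_Aᵀ` and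
`B† = R_B⁻¹ Q_Bᵀ`, so with `M = Q_Aᵀ Q_B` the consistency matrix is `R_A⁻¹ (I − M Mᵀ) R_A`.
Since `I − XY` and `I − YX` have the same characteristic polynomial, this is the
characteristic polynomial of `I − Mᵀ M = V (I − diag σ²) Vᵀ`, i.e. of `diag (1 − σ²)`.
-/

open Matrix Polynomial

namespace IsMoorePenrose

variable {N s : ℕ} {M : Matrix (Fin N) (Fin s) ℝ}

theorem unique_s1 {P Q : Matrix (Fin s) (Fin N) ℝ}
    (hP : IsMoorePenrose M P) (hQ : IsMoorePenrose M Q) : P = Q := by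
  obtain ⟨hP1, hP2, hP3, hP4⟩ := hP
  obtain ⟨hQ1, hQ2, hQ3, hQ4⟩ := hQ
  have hP_eq : P = P * M * Q := by
    calc P = P * M * P := hP2.symm
      _ = P * (M * P)ᵀ := by rw [Matrix.mul_assoc, hP3]
      _ = P * ((M * Q) * (M * P))ᵀ := by rw [← Matrix.mul_assoc (M * Q) M P, hQ1]
      _ = P * M * P * (M * Q) := by
            rw [Matrix.transpose_mul, hP3, hQ3]; simp only [Matrix.mul_assoc]
      _ = P * M * Q := by rw [hP2, Matrix.mul_assoc]
  have hQ_eq : Q = P * M * Q := by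
    calc Q = (Q * M)ᵀ * Q := by rw [hQ4, hQ2]
      _ = ((Q * M) * (P * M))ᵀ * Q := by
            rw [Matrix.mul_assoc Q M (P * M), ← Matrix.mul_assoc M P M, hP1]
      _ = (P * M) * (Q * M * Q) := by
            rw [Matrix.transpose_mul, hP4, hQ4]; simp only [Matrix.mul_assoc]
      _ = P * M * Q := by rw [hQ2]
  exact hP_eq.trans hQ_eq.symm

theorem of_mul_eq_one_of_symm {Md : Matrix (Fin s) (Fin N) ℝ}
    (hleft : Md * M = 1) (hsymm : (M * Md)ᵀ = M * Md) : IsMoorePenrose M Md :=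
  ⟨by rw [Matrix.mul_assoc, hleft, Matrix.mul_one], by rw [hleft, Matrix.one_mul], hsymm,
    by rw [hleft, Matrix.transpose_one]⟩

theorem thinQR {Q : Matrix (Fin N) (Fin s) ℝ} {R : Matrix (Fin s) (Fin s) ℝ}
    (hQ : Qᵀ * Q = 1) (hR : IsUnit R.det) : IsMoorePenrose (Q * R) (R⁻¹ * Qᵀ) := by
  refine of_mul_eq_one_of_symm ?_ ?_
  · rw [Matrix.mul_assoc, ← Matrix.mul_assoc Qᵀ, hQ, Matrix.one_mul, R.nonsing_inv_mul hR]
  · rw [Matrix.mul_assoc, ← Matrix.mul_assoc R, R.mul_nonsing_inv hR, Matrix.one_mul,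
      Matrix.transpose_mul, Matrix.transpose_transpose]

end IsMoorePenrose

namespace Matrix

variable {n R : Type*} [Fintype n] [DecidableEq n] [CommRing R]

theorem charpoly_one_sub_mul_comm (A B : Matrix n n R) :
    (1 - A * B).charpoly = (1 - B * A).charpoly := by
  have h : ∀ X Y : Matrix n n R, 1 - X * Y = X * (-Y) - scalar n (-1) := by
    intro X Y
    rw [Matrix.mul_neg, map_neg, map_one]
    abel
  rw [h A B, h B A, charpoly_sub_scalar, charpoly_sub_scalar, charpoly_mul_comm,
    Matrix.neg_mul, ← Matrix.mul_neg]

theorem charpoly_one_sub_mul_transpose {M V : Matrix n n R} {d : n → R}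
    (hV : Vᵀ * V = 1) (hM : Mᵀ * M = V * diagonal d * Vᵀ) :
    (1 - M * Mᵀ).charpoly = ∏ i, (X - C (1 - d i)) := by
  rw [charpoly_one_sub_mul_comm, hM, charpoly_one_sub_mul_comm, ← Matrix.mul_assoc, hV,
    Matrix.one_mul, ← diagonal_one, diagonal_sub, charpoly_diagonal]

end Matrix

theorem Polynomial.roots_prod_X_sub_C_univ {ι R : Type*} [Fintype ι] [CommRing R] [IsDomain R]
    (f : ι → R) : (∏ i, (X - C (f i))).roots = Multiset.map f Finset.univ.val := by
  rw [roots_prod _ _ (Finset.prod_ne_zero_iff.mpr fun i _ => X_sub_C_ne_zero (f i))]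
  simp only [roots_X_sub_C, Multiset.bind_singleton]

theorem stmt_1_general {N s : ℕ}
    (A B QA QB : Matrix (Fin N) (Fin s) ℝ)
    (RA RB V : Matrix (Fin s) (Fin s) ℝ)
    (σ : Fin s → ℝ)
    (Adag Bdag : Matrix (Fin s) (Fin N) ℝ)
    -- thin QR decomposition of A
    (hAQR : A = QA * RA) (hQA : QAᵀ * QA = 1)
    (hRAunit : IsUnit RA.det)
    -- thin QR decomposition of B
    (hBQR : B = QB * RB) (hQB : QBᵀ * QB = 1)
    (hRBunit : IsUnit RB.det)
    -- the σᵢ are the singular values of Q_Aᵀ Q_B : the σᵢ² are the eigenvalues of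
    -- (Q_AᵀQ_B)ᵀ(Q_AᵀQ_B) (via an orthogonal eigendecomposition), decreasing and nonnegative
    (hVorth : Vᵀ * V = 1)
    (hsv : (QAᵀ * QB)ᵀ * (QAᵀ * QB) = V * Matrix.diagonal (fun i => σ i ^ 2) * Vᵀ)
    -- Moore–Penrose pseudoinverses of A and B
    (hAdag : IsMoorePenrose A Adag) (hBdag : IsMoorePenrose B Bdag) :
    ((1 : Matrix (Fin s) (Fin s) ℝ) - (Adag * B) * (Bdag * A)).charpoly
        = ∏ i : Fin s, (X - C (1 - σ i ^ 2)) ∧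
      ((1 : Matrix (Fin s) (Fin s) ℝ) - (Adag * B) * (Bdag * A)).charpoly.roots
        = Multiset.map (fun i => 1 - σ i ^ 2) Finset.univ.val := by
  subst hAQR hBQR
  obtain rfl := hAdag.unique_s1 (.thinQR hQA hRAunit)
  obtain rfl := hBdag.unique_s1 (.thinQR hQB hRBunit)
  have hconj : RA⁻¹ * QAᵀ * (QB * RB) * (RB⁻¹ * QBᵀ * (QA * RA))
      = RA⁻¹ * ((QAᵀ * QB) * (QAᵀ * QB)ᵀ) * RA := by
    rw [Matrix.transpose_mul, Matrix.transpose_transpose]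
    simp only [Matrix.mul_assoc]
    rw [← Matrix.mul_assoc RB, RB.mul_nonsing_inv hRBunit, Matrix.one_mul]
  have hcharpoly : (1 - RA⁻¹ * QAᵀ * (QB * RB) * (RB⁻¹ * QBᵀ * (QA * RA))).charpoly
      = ∏ i, (X - C (1 - σ i ^ 2)) := by
    rw [hconj, charpoly_one_sub_mul_comm, ← Matrix.mul_assoc, RA.mul_nonsing_inv hRAunit,
      Matrix.one_mul, charpoly_one_sub_mul_transpose hVorth hsv]
  exact ⟨hcharpoly, hcharpoly ▸ roots_prod_X_sub_C_univ _⟩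

/-- With `A = Q_A R_A`, `B = Q_B R_B` thin QR decompositions of the
full-column-rank matrices `A, B ∈ ℝ^{N×s}` and `σ₁ ≥ … ≥ σ_s ≥ 0` the singular values of
`Q_Aᵀ Q_B` (i.e. the square roots of the eigenvalues of `(Q_AᵀQ_B)ᵀ(Q_AᵀQ_B)`, listed in
decreasing order), the characteristic polynomial of the consistency matrix
`M_c = I − (A†B)(B†A)` equals `∏ᵢ (X − (1 − σᵢ²))`; in particular the eigenvalues of `M_c`,
with multiplicity, are exactly `1 − σᵢ²`, `i = 1,…,s`. -/
theorem stmt_1 {N s : ℕ}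
    (A B QA QB : Matrix (Fin N) (Fin s) ℝ)
    (RA RB V : Matrix (Fin s) (Fin s) ℝ)
    (σ : Fin s → ℝ)
    (Adag Bdag : Matrix (Fin s) (Fin N) ℝ)
    -- full column rank
    (hArank : A.rank = s) (hBrank : B.rank = s)
    -- thin QR decomposition of A
    (hAQR : A = QA * RA) (hQA : QAᵀ * QA = 1)
    (hRAtri : RA.BlockTriangular id) (hRAunit : IsUnit RA.det)
    -- thin QR decomposition of B
    (hBQR : B = QB * RB) (hQB : QBᵀ * QB = 1)
    (hRBtri : RB.BlockTriangular id) (hRBunit : IsUnit RB.det)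
    -- the σᵢ are the singular values of Q_Aᵀ Q_B : the σᵢ² are the eigenvalues of
    -- (Q_AᵀQ_B)ᵀ(Q_AᵀQ_B) (via an orthogonal eigendecomposition), decreasing and nonnegative
    (hVorth : Vᵀ * V = 1) (hVorth' : V * Vᵀ = 1)
    (hσdec : Antitone σ) (hσnonneg : ∀ i, 0 ≤ σ i)
    (hsv : (QAᵀ * QB)ᵀ * (QAᵀ * QB) = V * Matrix.diagonal (fun i => σ i ^ 2) * Vᵀ)
    -- Moore–Penrose pseudoinverses of A and B
    (hAdag : IsMoorePenrose A Adag) (hBdag : IsMoorePenrose B Bdag) :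
    ((1 : Matrix (Fin s) (Fin s) ℝ) - (Adag * B) * (Bdag * A)).charpoly
        = ∏ i : Fin s, (X - C (1 - σ i ^ 2)) ∧
      ((1 : Matrix (Fin s) (Fin s) ℝ) - (Adag * B) * (Bdag * A)).charpoly.roots
        = Multiset.map (fun i => 1 - σ i ^ 2) Finset.univ.val :=
  stmt_1_general A B QA QB RA RB V σ Adag Bdag hAQR hQA hRAunit hBQR hQB hRBunit hVorth hsv hAdag
    hBdag
end

section
/- Let A, B ∈ ℝ^{N×s} with A having full column rank, and let M_c = I_s − (A†B)(B†A) be the consistency matrix. If v ∈ ℝ^s is an eigenvector of M_c with eigenvalue λ, then ‖A v − B B† A v‖² = λ ‖A v‖², where ‖·‖ is the Euclidean norm on ℝ^N; that is, the squared distance of Av to the column space of B equals λ times the squared norm of Av. -/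
/-!
Write `w = A v` and `P = B B†`. As `P` is symmetric and idempotent, `‖w - P w‖² = ‖w‖² - ⟨w, P w⟩`.
As `A A†` is the orthogonal projection onto the column space of `A`, which contains `w`,
`⟨w, P w⟩ = ⟨w, A A† P A v⟩ = ⟨w, A (A†B)(B†A) v⟩ = (1 - λ) ‖w‖²` by the eigenvalue equation.
-/

open Matrix

theorem sum_sq_eq_dotProduct_self {n R : Type*} [Fintype n] [Semiring R] (f : n → R) :
    ∑ i, f i ^ 2 = f ⬝ᵥ f := by
  simp only [dotProduct, sq]

theorem dotProduct_sub_mulVec_self_of_isSymm_of_idempotent {n R : Type*} [Fintype n] [CommRing R]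
    {P : Matrix n n R} (hsymm : Pᵀ = P) (hidem : P * P = P) (w : n → R) :
    (w - P *ᵥ w) ⬝ᵥ (w - P *ᵥ w) = w ⬝ᵥ w - w ⬝ᵥ (P *ᵥ w) := by
  have hPP : (P *ᵥ w) ⬝ᵥ (P *ᵥ w) = w ⬝ᵥ (P *ᵥ w) := by
    conv_lhs => rw [← hsymm]
    rw [dotProduct_transpose_mulVec, mulVec_mulVec, hsymm, hidem, dotProduct_comm]
  rw [sub_dotProduct, dotProduct_sub, dotProduct_sub, hPP, dotProduct_comm (P *ᵥ w) w]
  ring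

namespace IsMoorePenrose

variable {N s : ℕ} {M : Matrix (Fin N) (Fin s) ℝ} {Md : Matrix (Fin s) (Fin N) ℝ}

theorem mul_pinv_mul_mul_pinv (h : IsMoorePenrose M Md) : M * Md * (M * Md) = M * Md := by
  rw [← Matrix.mul_assoc, h.1]

theorem mulVec_dotProduct_eq_mulVec_dotProduct_mul_pinv (h : IsMoorePenrose M Md)
    (v : Fin s → ℝ) (x : Fin N → ℝ) :
    (M *ᵥ v) ⬝ᵥ x = (M *ᵥ v) ⬝ᵥ ((M * Md) *ᵥ x) := by
  rw [← h.2.2.1, dotProduct_transpose_mulVec, mulVec_mulVec, h.1, dotProduct_comm]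

end IsMoorePenrose

theorem stmt_3_general {N s : ℕ}
    (A B : Matrix (Fin N) (Fin s) ℝ)
    (Adag Bdag : Matrix (Fin s) (Fin N) ℝ)
    (hAdag : IsMoorePenrose A Adag) (hBdag : IsMoorePenrose B Bdag)
    (v : Fin s → ℝ) (lam : ℝ)
    (heig : ((1 : Matrix (Fin s) (Fin s) ℝ) - (Adag * B) * (Bdag * A)).mulVec v = lam • v) :
    ∑ i, ((A.mulVec v - B.mulVec (Bdag.mulVec (A.mulVec v))) i) ^ 2
      = lam * ∑ i, (A.mulVec v i) ^ 2 := by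
  have hMc : ((Adag * B) * (Bdag * A)) *ᵥ v = v - lam • v := by
    rw [← heig, sub_mulVec, one_mulVec, sub_sub_cancel]
  have hproj : (A *ᵥ v) ⬝ᵥ ((B * Bdag) *ᵥ (A *ᵥ v)) = (1 - lam) * ((A *ᵥ v) ⬝ᵥ (A *ᵥ v)) := by
    rw [hAdag.mulVec_dotProduct_eq_mulVec_dotProduct_mul_pinv, mulVec_mulVec, mulVec_mulVec,
      show A * Adag * (B * Bdag) * A = A * ((Adag * B) * (Bdag * A)) by simp only [Matrix.mul_assoc],
      ← mulVec_mulVec, hMc, mulVec_sub, mulVec_smul, dotProduct_sub, dotProduct_smul, smul_eq_mul]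
    ring
  rw [sum_sq_eq_dotProduct_self, sum_sq_eq_dotProduct_self, mulVec_mulVec,
    dotProduct_sub_mulVec_self_of_isSymm_of_idempotent hBdag.2.2.1 hBdag.mul_pinv_mul_mul_pinv,
    hproj]
  ring

/-- Let `A, B ∈ ℝ^{N×s}` with `A` of full column rank, and let
`M_c = I − (A†B)(B†A)`. If `v` is an eigenvector of `M_c` with eigenvalue `λ`, then
`‖A v − B B† A v‖² = λ ‖A v‖²` in the Euclidean norm of `ℝ^N`: the squared distance of
`Av` to the column space of `B` equals `λ` times the squared norm of `Av`. -/
theorem stmt_3 {N s : ℕ}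
    (A B : Matrix (Fin N) (Fin s) ℝ)
    (Adag Bdag : Matrix (Fin s) (Fin N) ℝ)
    (hArank : A.rank = s)
    (hAdag : IsMoorePenrose A Adag) (hBdag : IsMoorePenrose B Bdag)
    (v : Fin s → ℝ) (lam : ℝ) (hv : v ≠ 0)
    (heig : ((1 : Matrix (Fin s) (Fin s) ℝ) - (Adag * B) * (Bdag * A)).mulVec v = lam • v) :
    ∑ i, ((A.mulVec v - B.mulVec (Bdag.mulVec (A.mulVec v))) i) ^ 2
      = lam * ∑ i, (A.mulVec v i) ^ 2 :=
  stmt_3_general A B Adag Bdag hAdag hBdag v lam heig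
end

section
/- Let A, B ∈ ℝ^{N×s} both have full column rank. Then every eigenvalue of the consistency matrix M_c = I_s − (A†B)(B†A) is real and lies in the closed interval [0, 1]. -/
open Matrix

/-!
With `G = AᵀA`, the Penrose equations give `G A† = Aᵀ`, hence `G M_c = Aᵀ (I - BB†) A` and
`G (I - M_c) = Aᵀ BB† A`. Both are positive semidefinite because `BB†` is an orthogonal
projection, and `G` is positive definite because `A` has full column rank. For an eigenvector
`z` of `M_c` with eigenvalue `μ`, the quadratic forms of these three matrices at `z` are
`μ c`, `(1 - μ) c` and `c > 0`, which forces `μ ∈ [0, 1]`.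
-/

open scoped ComplexOrder MatrixOrder

theorem Matrix.isUnit_of_rank_eq_card {K n : Type*} [Field K] [Fintype n] [DecidableEq n]
    {M : Matrix n n K} (h : M.rank = Fintype.card n) : IsUnit M := by
  rw [← mulVec_surjective_iff_isUnit, ← coe_mulVecLin, ← LinearMap.range_eq_top]
  exact Submodule.eq_top_of_finrank_eq (by simpa [rank] using h)

theorem Complex.mem_Icc_of_mul_mem_Icc {a μ : ℂ} (ha : 0 < a) (h : μ * a ∈ Set.Icc 0 a) :
    μ ∈ Set.Icc (0 : ℂ) 1 := by
  have cancel (b : ℂ) (hb : 0 ≤ b * a) : 0 ≤ b := by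
    simpa [ha.ne'] using mul_nonneg hb (inv_nonneg.2 ha.le)
  exact ⟨cancel μ h.1, sub_nonneg.1 (cancel _ (by rw [sub_mul, one_mul, sub_nonneg]; exact h.2))⟩

theorem Matrix.PosDef.eigenvalue_mem_Icc {n : Type*} [Fintype n] {G M : Matrix n n ℂ}
    (hG : G.PosDef) (h₀ : (G * M).PosSemidef) (h₁ : (G - G * M).PosSemidef)
    {μ : ℂ} {z : n → ℂ} (hz : z ≠ 0) (hμ : M *ᵥ z = μ • z) :
    μ ∈ Set.Icc (0 : ℂ) 1 := by
  have hGM : star z ⬝ᵥ (G * M) *ᵥ z = μ * (star z ⬝ᵥ G *ᵥ z) := by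
    rw [← mulVec_mulVec, hμ, mulVec_smul, dotProduct_smul, smul_eq_mul]
  refine Complex.mem_Icc_of_mul_mem_Icc (hG.dotProduct_mulVec_pos hz) ⟨?_, ?_⟩
  · exact hGM ▸ h₀.dotProduct_mulVec_nonneg z
  · simpa [sub_mulVec, hGM] using h₁.dotProduct_mulVec_nonneg z

namespace IsMoorePenrose
variable {N s : ℕ} {A : Matrix (Fin N) (Fin s) ℝ} {Adag : Matrix (Fin s) (Fin N) ℝ}

theorem transpose_mul_self_mul (h : IsMoorePenrose A Adag) : Aᵀ * A * Adag = Aᵀ := by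
  rw [Matrix.mul_assoc, ← h.2.2.1, ← transpose_mul, h.1]

theorem mul_eq_one_of_rank_eq (h : IsMoorePenrose A Adag) (hA : A.rank = s) : Adag * A = 1 := by
  have hG : IsUnit (Aᵀ * A) :=
    isUnit_of_rank_eq_card (by rw [rank_transpose_mul_self, hA, Fintype.card_fin])
  refine hG.mul_left_cancel ?_
  rw [← Matrix.mul_assoc, h.transpose_mul_self_mul, Matrix.mul_one]

theorem isStarProjection_mul (h : IsMoorePenrose A Adag) : IsStarProjection (A * Adag) := by
  refine ⟨?_, ?_⟩
  · rw [IsIdempotentElem, ← Matrix.mul_assoc, h.1]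
  · rw [IsSelfAdjoint, star_eq_conjTranspose, conjTranspose_eq_transpose_of_trivial, h.2.2.1]

theorem transpose_mul_self_mul_consistency (h : IsMoorePenrose A Adag)
    (B : Matrix (Fin N) (Fin s) ℝ) (Bdag : Matrix (Fin s) (Fin N) ℝ) :
    Aᵀ * A * (1 - Adag * B * (Bdag * A)) = Aᵀ * (1 - B * Bdag) * A := by
  simp only [Matrix.mul_sub, Matrix.sub_mul, Matrix.mul_one, ← Matrix.mul_assoc,
    h.transpose_mul_self_mul]

end IsMoorePenrose

section ofReal
variable {l m n : Type*}

theorem Matrix.transpose_map_ofReal (X : Matrix m n ℝ) :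
    Xᵀ.map Complex.ofReal = (X.map Complex.ofReal)ᴴ := by
  rw [← conjTranspose_eq_transpose_of_trivial,
    conjTranspose_map _ fun x => (Complex.conj_ofReal x).symm]

variable [Fintype m]

theorem Matrix.map_ofReal_mul (L : Matrix l m ℝ) (M : Matrix m n ℝ) :
    (L * M).map Complex.ofReal = L.map Complex.ofReal * M.map Complex.ofReal :=
  Matrix.map_mul (f := Complex.ofRealHom)

theorem IsStarProjection.map_ofReal {P : Matrix m m ℝ} (hP : IsStarProjection P) :
    IsStarProjection (P.map Complex.ofReal) := by
  refine ⟨?_, ?_⟩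
  · rw [IsIdempotentElem, ← map_ofReal_mul, hP.isIdempotentElem.eq]
  · rw [IsSelfAdjoint, star_eq_conjTranspose, ← transpose_map_ofReal,
      ← conjTranspose_eq_transpose_of_trivial, ← star_eq_conjTranspose,
      hP.isSelfAdjoint.star_eq]

variable [Fintype n] [DecidableEq m] [DecidableEq n]

theorem Matrix.eigenvalue_map_ofReal_mem_Icc {X : Matrix m n ℝ} {Y : Matrix n m ℝ}
    (hYX : Y * X = 1) {P : Matrix m m ℝ} (hP : IsStarProjection P) {M : Matrix n n ℝ}
    (hM : Xᵀ * X * M = Xᵀ * (1 - P) * X) {μ : ℂ} {z : n → ℂ} (hz : z ≠ 0)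
    (hμ : M.map Complex.ofReal *ᵥ z = μ • z) : μ ∈ Set.Icc (0 : ℂ) 1 := by
  set X' := X.map Complex.ofReal
  set P' := P.map Complex.ofReal
  have hX' : Function.Injective X'.mulVec := by
    refine Function.LeftInverse.injective (g := (Y.map Complex.ofReal).mulVec) fun v => ?_
    rw [mulVec_mulVec, ← map_ofReal_mul, hYX]
    simp
  have hM' : X'ᴴ * X' * M.map Complex.ofReal = X'ᴴ * (1 - P') * X' := by
    simpa [map_ofReal_mul, Matrix.map_sub, transpose_map_ofReal] using
      congrArg (Matrix.map · Complex.ofReal) hM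
  have hP' := hP.map_ofReal
  refine (PosDef.conjTranspose_mul_self X' hX').eigenvalue_mem_Icc ?_ ?_ hz hμ
  · rw [hM']
    exact (nonneg_iff_posSemidef.1 hP'.one_sub.nonneg).conjTranspose_mul_mul_same X'
  · rw [hM', Matrix.mul_sub, Matrix.sub_mul, Matrix.mul_one, sub_sub_cancel]
    exact (nonneg_iff_posSemidef.1 hP'.nonneg).conjTranspose_mul_mul_same X'

end ofReal

theorem stmt_4_general {N s : ℕ}
    (A B : Matrix (Fin N) (Fin s) ℝ)
    (Adag Bdag : Matrix (Fin s) (Fin N) ℝ)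
    (hArank : A.rank = s)
    (hAdag : IsMoorePenrose A Adag) (hBdag : IsMoorePenrose B Bdag) :
    ∀ μ : ℂ,
      (∃ z : Fin s → ℂ, z ≠ 0 ∧
        (((1 : Matrix (Fin s) (Fin s) ℝ) - (Adag * B) * (Bdag * A)).map
            Complex.ofReal).mulVec z = μ • z) →
      μ.im = 0 ∧ 0 ≤ μ.re ∧ μ.re ≤ 1 := by
  rintro μ ⟨z, hz, hμ⟩
  obtain ⟨h0, h1⟩ := eigenvalue_map_ofReal_mem_Icc (hAdag.mul_eq_one_of_rank_eq hArank)
    hBdag.isStarProjection_mul (hAdag.transpose_mul_self_mul_consistency B Bdag) hz hμ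
  rw [Complex.nonneg_iff] at h0
  rw [Complex.le_def] at h1
  exact ⟨h0.2.symm, h0.1, by simpa using h1.1⟩

/-- If `A, B ∈ ℝ^{N×s}` both have full column rank, then every (complex)
eigenvalue of the consistency matrix `M_c = I − (A†B)(B†A)` is real and lies in `[0, 1]`. -/
theorem stmt_4 {N s : ℕ}
    (A B : Matrix (Fin N) (Fin s) ℝ)
    (Adag Bdag : Matrix (Fin s) (Fin N) ℝ)
    (hArank : A.rank = s) (hBrank : B.rank = s)
    (hAdag : IsMoorePenrose A Adag) (hBdag : IsMoorePenrose B Bdag) :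
    ∀ μ : ℂ,
      (∃ z : Fin s → ℂ, z ≠ 0 ∧
        (((1 : Matrix (Fin s) (Fin s) ℝ) - (Adag * B) * (Bdag * A)).map
            Complex.ofReal).mulVec z = μ • z) →
      μ.im = 0 ∧ 0 ≤ μ.re ∧ μ.re ≤ 1 :=
  stmt_4_general A B Adag Bdag hArank hAdag hBdag
end

section
/- Let A, B ∈ ℝ^{N×s} both have full column rank, and let λ_max be the largest eigenvalue of the consistency matrix M_c = I_s − (A†B)(B†A). Then λ_max equals the supremum, over unit vectors u in the column space of A, of ‖u − B B† u‖², i.e., λ_max = sup { ‖u − B B† u‖² : u ∈ col(A), ‖u‖ = 1 }. -/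
/-!
With `P = A A†`, the orthogonal projection onto `col(A)`, and `Q = I - B B†`, the orthogonal
projection onto `col(B)ᗮ`, the Penrose identity `A A† A = A` gives `A M_c = P Q A`. Since `A`
has full column rank, it conjugates `M_c` to the compression `P Q` of `Q` to `col(A)`, so both
have the same eigenvalues. The compression is symmetric with quadratic form
`⟪P Q u, u⟫ = ‖Q u‖²` on `col(A)`, and for a symmetric operator the largest eigenvalue is the
maximum of the quadratic form on the unit sphere.
-/

open Matrix

open Function Metric LinearMap Module.End
open scoped InnerProductSpace

theorem Matrix.injective_mulVec_of_rank_eq_card {K m n : Type*} [Field K] [Fintype m]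
    [Fintype n] {A : Matrix m n K} (h : A.rank = Fintype.card n) : Injective A.mulVec := by
  have hker := LinearMap.finrank_range_add_finrank_ker A.mulVecLin
  rw [← Matrix.rank, h, Module.finrank_fintype_fun_eq_card, add_eq_left,
    Submodule.finrank_eq_zero] at hker
  exact LinearMap.ker_eq_bot.1 hker

theorem Matrix.hasEigenvalue_toEuclideanLin_iff {𝕜 n : Type*} [RCLike 𝕜] [Fintype n]
    [DecidableEq n] (K : Matrix n n 𝕜) (μ : 𝕜) :
    HasEigenvalue (toEuclideanLin K) μ ↔ ∃ v, v ≠ 0 ∧ K *ᵥ v = μ • v := by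
  simp only [hasEigenvalue_iff, Submodule.ne_bot_iff, mem_eigenspace_iff]
  constructor
  · rintro ⟨x, hx, hx0⟩
    exact ⟨x.ofLp, by simpa using hx0, congr_arg WithLp.ofLp hx⟩
  · rintro ⟨v, hv0, hv⟩
    exact ⟨WithLp.toLp 2 v, congr_arg (WithLp.toLp 2) hv, by simpa using hv0⟩

theorem Matrix.toLp_mem_range_toEuclideanLin_iff {𝕜 m n : Type*} [RCLike 𝕜] [Fintype n]
    [DecidableEq n] (M : Matrix m n 𝕜) (u : m → 𝕜) :
    WithLp.toLp 2 u ∈ range (toEuclideanLin M) ↔ u ∈ range M.mulVecLin := by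
  constructor
  · rintro ⟨y, hy⟩
    exact ⟨y.ofLp, congr_arg WithLp.ofLp hy⟩
  · rintro ⟨a, rfl⟩
    exact ⟨WithLp.toLp 2 a, rfl⟩

theorem LinearMap.IsSymmetric.isGreatest_inner_map_self_sphere {E : Type*}
    [NormedAddCommGroup E] [InnerProductSpace ℝ E] [FiniteDimensional ℝ E] {T : E →ₗ[ℝ] E}
    (hT : T.IsSymmetric) {μ : ℝ} (hμ : IsGreatest {ν | HasEigenvalue T ν} μ) :
    IsGreatest ((fun x ↦ ⟪T x, x⟫_ℝ) '' sphere 0 1) μ := by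
  obtain ⟨v, hv⟩ := hμ.1.exists_hasEigenvector
  have : Nontrivial E := ⟨v, 0, hv.2⟩
  have hv0 : ‖v‖ ≠ 0 := norm_ne_zero_iff.2 hv.2
  refine ⟨⟨‖v‖⁻¹ • v, by simp [norm_smul, hv0], ?_⟩, ?_⟩
  · simp only [map_smul, hv.apply_eq_smul, real_inner_smul_left, real_inner_smul_right,
      real_inner_self_eq_norm_sq]
    field_simp
  rintro _ ⟨x, hx, rfl⟩
  rw [mem_sphere_zero_iff_norm] at hx
  let T' := LinearMap.toContinuousLinearMap T
  have hbdd : BddAbove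
      (Set.range fun y : {y : E // y ≠ 0} ↦ RCLike.re ⟪T y, y⟫_ℝ / ‖(y : E)‖ ^ 2) :=
    ⟨‖T'‖, by
      rintro _ ⟨y, rfl⟩
      exact (le_abs_self _).trans (T'.rayleighQuotient_le_norm y)⟩
  calc ⟪T x, x⟫_ℝ = RCLike.re ⟪T x, x⟫_ℝ / ‖x‖ ^ 2 := by simp [hx]
    _ ≤ _ := le_ciSup hbdd ⟨x, by rintro rfl; simp at hx⟩
    _ ≤ μ := hμ.2 hT.hasEigenvalue_iSup_of_finiteDimensional

namespace LinearMap

section Module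

variable {R E F : Type*} [CommRing R] [AddCommGroup E] [Module R E] [AddCommGroup F] [Module R F]

/-- For an orthogonal projection `p`, this is the compression of `q` to the range of `p`. -/
def compress (p q : Module.End R E) : Module.End R (range p) :=
  (p ∘ₗ q).restrict fun x _ ↦ mem_range_self p (q x)

@[simp]
theorem coe_compress_apply (p q : Module.End R E) (x : range p) :
    (compress p q x : E) = p (q x) := rfl

theorem hasEigenvalue_compress_iff {p q : Module.End R E} {L : F →ₗ[R] E} (hL : Injective L)
    (hrange : range p = range L) {g : Module.End R F} (hg : p ∘ₗ q ∘ₗ L = L ∘ₗ g) {μ : R} :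
    HasEigenvalue (compress p q) μ ↔ HasEigenvalue g μ := by
  simp only [hasEigenvalue_iff, Submodule.ne_bot_iff, mem_eigenspace_iff]
  constructor
  · rintro ⟨⟨x, hx⟩, hTx, hx0⟩
    obtain ⟨a, rfl⟩ : x ∈ range L := hrange ▸ hx
    refine ⟨a, hL ?_, fun ha ↦ hx0 (by simp [ha])⟩
    rw [map_smul, ← LinearMap.comp_apply, ← hg]
    exact congr_arg Subtype.val hTx
  · rintro ⟨a, hga, ha0⟩
    refine ⟨⟨L a, hrange ▸ mem_range_self L a⟩, Subtype.ext ?_, ?_⟩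
    · rw [coe_compress_apply, SetLike.val_smul, ← map_smul, ← hga]
      exact LinearMap.congr_fun hg a
    · simpa [Subtype.ext_iff] using (map_ne_zero_iff L hL).2 ha0

end Module

section InnerProductSpace

variable {𝕜 E : Type*} [RCLike 𝕜] [NormedAddCommGroup E] [InnerProductSpace 𝕜 E]
  {p q : E →ₗ[𝕜] E}

theorem IsSymmetricProjection.one_sub (hp : p.IsSymmetricProjection) :
    (1 - p).IsSymmetricProjection :=
  ⟨hp.isIdempotentElem.one_sub, IsSymmetric.id.sub hp.isSymmetric⟩

theorem IsSymmetricProjection.isSymmetric_compress (hp : p.IsSymmetricProjection)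
    (hq : q.IsSymmetric) : (compress p q).IsSymmetric := by
  have hfix (x : range p) : p x = x := hp.isIdempotentElem.mem_range_iff.1 x.2
  intro x y
  simp only [Submodule.coe_inner, coe_compress_apply]
  rw [hp.isSymmetric, hfix, hq, ← hp.isSymmetric, hfix]

theorem IsSymmetricProjection.inner_compress_self (hp : p.IsSymmetricProjection)
    (hq : q.IsSymmetricProjection) (x : range p) :
    ⟪compress p q x, x⟫_𝕜 = (‖q x‖ ^ 2 : ℝ) := by
  have hfix : p x = x := hp.isIdempotentElem.mem_range_iff.1 x.2
  have hqq : q (q x) = q x := congr($hq.isIdempotentElem.eq x)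
  rw [Submodule.coe_inner, coe_compress_apply, hp.isSymmetric, hfix, ← hqq, hq.isSymmetric,
    hqq, inner_self_eq_norm_sq_to_K]
  norm_cast

end InnerProductSpace

end LinearMap

def consistencyMatrix {N s : ℕ} (A B : Matrix (Fin N) (Fin s) ℝ)
    (Adag Bdag : Matrix (Fin s) (Fin N) ℝ) : Matrix (Fin s) (Fin s) ℝ :=
  1 - Adag * B * (Bdag * A)

namespace IsMoorePenrose

variable {N s : ℕ} {A B : Matrix (Fin N) (Fin s) ℝ} {Adag Bdag : Matrix (Fin s) (Fin N) ℝ}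

theorem isSymmetricProjection (h : IsMoorePenrose A Adag) :
    (toEuclideanLin (A * Adag)).IsSymmetricProjection where
  isIdempotentElem := by
    rw [IsIdempotentElem, Module.End.mul_eq_comp, ← toLpLin_mul_same, ← Matrix.mul_assoc, h.1]
  isSymmetric := isSymmetric_toEuclideanLin_iff.2 h.2.2.1

theorem isSymmetricProjection_one_sub (h : IsMoorePenrose A Adag) :
    (toEuclideanLin (1 - A * Adag)).IsSymmetricProjection := by
  simpa only [map_sub, toLpLin_one, Module.End.one_eq_id] using h.isSymmetricProjection.one_sub

theorem range_toEuclideanLin_mul (h : IsMoorePenrose A Adag) :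
    range (toEuclideanLin (A * Adag)) = range (toEuclideanLin A) := by
  refine le_antisymm ?_ ?_
  · rw [toLpLin_mul_same]
    exact range_comp_le_range _ _
  · conv_lhs => rw [← h.1, toLpLin_mul_same]
    exact range_comp_le_range _ _

theorem hasEigenvalue_compress_iff_consistencyMatrix (hA : IsMoorePenrose A Adag)
    (hAinj : Injective A.mulVec) (μ : ℝ) :
    HasEigenvalue (compress (toEuclideanLin (A * Adag)) (toEuclideanLin (1 - B * Bdag))) μ ↔
      ∃ v, v ≠ 0 ∧ consistencyMatrix A B Adag Bdag *ᵥ v = μ • v := by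
  have hAAA : A * (Adag * A) = A := by rw [← Matrix.mul_assoc, hA.1]
  rw [← hasEigenvalue_toEuclideanLin_iff]
  refine LinearMap.hasEigenvalue_compress_iff
    (fun x y h ↦ WithLp.ofLp_injective 2 (hAinj (congr_arg WithLp.ofLp h)))
    hA.range_toEuclideanLin_mul ?_
  simp only [consistencyMatrix, ← toLpLin_mul_same]
  congr 1
  simp only [Matrix.mul_sub, Matrix.sub_mul, Matrix.mul_one, Matrix.one_mul, Matrix.mul_assoc,
    hAAA]

theorem image_sphere_inner_compress (hA : IsMoorePenrose A Adag) (hB : IsMoorePenrose B Bdag) :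
    (fun x ↦ ⟪compress (toEuclideanLin (A * Adag)) (toEuclideanLin (1 - B * Bdag)) x, x⟫_ℝ) ''
        sphere 0 1 =
      {r : ℝ | ∃ u : Fin N → ℝ, u ∈ LinearMap.range A.mulVecLin ∧
        (∑ i, (u i) ^ 2 = 1) ∧ r = ∑ i, ((u - B.mulVec (Bdag.mulVec u)) i) ^ 2} := by
  set p := toEuclideanLin (A * Adag)
  have hval (x : range p) : ⟪compress p (toEuclideanLin (1 - B * Bdag)) x, x⟫_ℝ =
      ∑ i, ((x.1.ofLp - B *ᵥ (Bdag *ᵥ x.1.ofLp)) i) ^ 2 := by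
    rw [hA.isSymmetricProjection.inner_compress_self hB.isSymmetricProjection_one_sub,
      EuclideanSpace.real_norm_sq_eq]
    simp [mulVec_mulVec]
  have hnorm (x : range p) : x ∈ sphere 0 1 ↔ ∑ i, (x.1.ofLp i) ^ 2 = 1 := by
    rw [mem_sphere_zero_iff_norm, ← pow_eq_one_iff_of_nonneg (norm_nonneg _) two_ne_zero,
      Submodule.coe_norm, EuclideanSpace.real_norm_sq_eq]
  have hmem (u : Fin N → ℝ) : WithLp.toLp 2 u ∈ range p ↔ u ∈ range A.mulVecLin := by
    rw [hA.range_toEuclideanLin_mul, toLp_mem_range_toEuclideanLin_iff]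
  ext r
  constructor
  · rintro ⟨x, hx, rfl⟩
    exact ⟨x.1.ofLp, (hmem _).1 x.2, (hnorm x).1 hx, hval x⟩
  · rintro ⟨u, hu, hu1, rfl⟩
    exact ⟨⟨WithLp.toLp 2 u, (hmem u).2 hu⟩, (hnorm _).2 hu1, hval _⟩

end IsMoorePenrose

theorem stmt_5_general {N s : ℕ}
    (A B : Matrix (Fin N) (Fin s) ℝ)
    (Adag Bdag : Matrix (Fin s) (Fin N) ℝ)
    (hArank : A.rank = s)
    (hAdag : IsMoorePenrose A Adag) (hBdag : IsMoorePenrose B Bdag)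
    (lamMax : ℝ)
    (hlam : IsGreatest {μ : ℝ | ∃ v : Fin s → ℝ, v ≠ 0 ∧
      ((1 : Matrix (Fin s) (Fin s) ℝ) - (Adag * B) * (Bdag * A)).mulVec v = μ • v} lamMax) :
    lamMax = sSup {r : ℝ | ∃ u : Fin N → ℝ, u ∈ LinearMap.range A.mulVecLin ∧
      (∑ i, (u i) ^ 2 = 1) ∧ r = ∑ i, ((u - B.mulVec (Bdag.mulVec u)) i) ^ 2} := by
  have hAinj : Injective A.mulVec := injective_mulVec_of_rank_eq_card (by simpa using hArank)
  have heig : IsGreatest {μ | HasEigenvalue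
      (compress (toEuclideanLin (A * Adag)) (toEuclideanLin (1 - B * Bdag))) μ} lamMax := by
    simpa only [hAdag.hasEigenvalue_compress_iff_consistencyMatrix hAinj, consistencyMatrix]
      using hlam
  have hsym := hAdag.isSymmetricProjection.isSymmetric_compress
    hBdag.isSymmetricProjection_one_sub.isSymmetric
  rw [← hAdag.image_sphere_inner_compress hBdag]
  exact (hsym.isGreatest_inner_map_self_sphere heig).csSup_eq.symm

/-- Let `A, B ∈ ℝ^{N×s}` both have full column rank, and let `λ_max` be the
largest eigenvalue of the consistency matrix `M_c = I − (A†B)(B†A)`. Then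
`λ_max = sup { ‖u − B B† u‖² : u ∈ col(A), ‖u‖ = 1 }` (Euclidean norm on `ℝ^N`). -/
theorem stmt_5 {N s : ℕ}
    (A B : Matrix (Fin N) (Fin s) ℝ)
    (Adag Bdag : Matrix (Fin s) (Fin N) ℝ)
    (hArank : A.rank = s) (hBrank : B.rank = s)
    (hAdag : IsMoorePenrose A Adag) (hBdag : IsMoorePenrose B Bdag)
    (lamMax : ℝ)
    (hlam : IsGreatest {μ : ℝ | ∃ v : Fin s → ℝ, v ≠ 0 ∧
      ((1 : Matrix (Fin s) (Fin s) ℝ) - (Adag * B) * (Bdag * A)).mulVec v = μ • v} lamMax) :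
    lamMax = sSup {r : ℝ | ∃ u : Fin N → ℝ, u ∈ LinearMap.range A.mulVecLin ∧
      (∑ i, (u i) ^ 2 = 1) ∧ r = ∑ i, ((u - B.mulVec (Bdag.mulVec u)) i) ^ 2} :=
  stmt_5_general A B Adag Bdag hArank hAdag hBdag lamMax hlam
end

section
/- Let H be a real inner product space, let u_1,…,u_s and v_1,…,v_s be orthonormal families in H, and let σ_1,…,σ_s ∈ [0,1] satisfy ⟨u_i, v_j⟩ = δ_ij σ_i for all i, j. Let V = span(v_1,…,v_s), let V' ⊂ V be a subspace with dim V' = s − 1, let ω ∈ V be a unit vector orthogonal to V', and write d_i = ⟨ω, v_i⟩. Define the symmetric matrix Ñ_1 ∈ ℝ^{(s−1)×(s−1)} by (Ñ_1)_{αβ} = (1 − σ_α²) δ_{αβ} + σ_α d_α σ_β d_β. Then sup { ‖f − P_{V'} f‖² : f ∈ span(u_1,…,u_{s−1}), ‖f‖ = 1 } equals the largest eigenvalue of Ñ_1. -/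
/-!
Projecting `uᵢ` onto `V = span v` gives `σᵢ vᵢ`, and `V'` is forced by its dimension to be the
orthogonal complement of `ω` inside `V`, so `P_{V'} = P_V - ⟨ω, ·⟩ ω`. For `f = ∑ cₐ uₐ` this
gives `‖f - P_{V'} f‖² = ‖f‖² - ‖P_V f‖² + ⟨ω, f⟩² = ∑ (1 - σₐ²) cₐ² + (∑ σₐ dₐ cₐ)²`, which is
the quadratic form of `Ñ₁` at `c`, with `‖c‖ = ‖f‖`. The supremum is thus the maximum of the
Rayleigh quotient of the symmetric matrix `Ñ₁`, i.e. its largest eigenvalue.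
-/

open scoped RealInnerProductSpace Matrix
open Submodule

namespace Matrix

lemma isHermitian_diagonal_add_vecMulVec {n : Type*} [DecidableEq n] (a w : n → ℝ) :
    (diagonal a + vecMulVec w w).IsHermitian :=
  (isHermitian_diagonal a).add (by simp [IsHermitian])

variable {n : Type*} [Fintype n] [DecidableEq n]

lemma IsHermitian.dotProduct_mulVec_le {M : Matrix n n ℝ} (hM : M.IsHermitian) {lam : ℝ}
    (hlam : lam ∈ upperBounds {μ : ℝ | ∃ z : n → ℝ, z ≠ 0 ∧ M *ᵥ z = μ • z}) (c : n → ℝ) :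
    c ⬝ᵥ M *ᵥ c ≤ lam * (c ⬝ᵥ c) := by
  set b := hM.eigenvectorBasis
  set x : EuclideanSpace ℝ n := WithLp.toLp 2 c
  set T := toEuclideanLin M
  have hT : T.IsSymmetric := isSymmetric_toEuclideanLin_iff.2 hM
  have hTb : ∀ i, T (b i) = hM.eigenvalues i • b i := fun i =>
    congrArg (WithLp.toLp 2) (hM.mulVec_eigenvectorBasis i)
  have hle : ∀ i, hM.eigenvalues i ≤ lam := fun i =>
    hlam ⟨b i, (WithLp.ofLp_eq_zero 2).ne.2 (b.orthonormal.ne_zero i),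
      hM.mulVec_eigenvectorBasis i⟩
  have hinner : ∀ y : n → ℝ, c ⬝ᵥ y = ⟪x, WithLp.toLp 2 y⟫ := fun y => by
    simp [EuclideanSpace.inner_eq_star_dotProduct, x, dotProduct_comm]
  have hquad : c ⬝ᵥ M *ᵥ c = ∑ i, hM.eigenvalues i * ⟪b i, x⟫ ^ 2 := by
    rw [hinner, show WithLp.toLp 2 (M *ᵥ c) = T x from rfl, ← b.sum_inner_mul_inner x (T x)]
    refine Finset.sum_congr rfl fun i _ => ?_
    rw [← hT, hTb, real_inner_smul_left, real_inner_comm x]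
    ring
  have hnorm : c ⬝ᵥ c = ∑ i, ⟪b i, x⟫ ^ 2 := by
    rw [hinner, ← b.sum_inner_mul_inner x x]
    simp only [real_inner_comm x, sq]
  rw [hquad, hnorm, Finset.mul_sum]
  exact Finset.sum_le_sum fun i _ => mul_le_mul_of_nonneg_right (hle i) (sq_nonneg _)

lemma IsHermitian.isGreatest_dotProduct_mulVec {M : Matrix n n ℝ} (hM : M.IsHermitian) {lam : ℝ}
    (hlam : IsGreatest {μ : ℝ | ∃ z : n → ℝ, z ≠ 0 ∧ M *ᵥ z = μ • z} lam) :
    IsGreatest {r : ℝ | ∃ c : n → ℝ, c ⬝ᵥ c = 1 ∧ r = c ⬝ᵥ M *ᵥ c} lam := by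
  obtain ⟨⟨z, hz0, hz⟩, hub⟩ := hlam
  refine ⟨?_, fun r ⟨c, hc, hr⟩ => by simpa [hr, hc] using hM.dotProduct_mulVec_le hub c⟩
  have hzz : 0 < z ⬝ᵥ z := by simpa using dotProduct_star_self_pos_iff.2 hz0
  set c := (√(z ⬝ᵥ z))⁻¹ • z
  have hc : c ⬝ᵥ c = 1 := by
    have hsq := Real.sq_sqrt hzz.le
    have hne := (Real.sqrt_pos.2 hzz).ne'
    simp only [c, smul_dotProduct, dotProduct_smul, smul_eq_mul]
    field_simp
    linarith
  have hMc : M *ᵥ c = lam • c := by rw [mulVec_smul, hz, smul_comm]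
  exact ⟨c, hc, by rw [hMc, dotProduct_smul, hc, smul_eq_mul, mul_one]⟩

lemma dotProduct_diagonal_add_vecMulVec_mulVec (a w c : n → ℝ) :
    c ⬝ᵥ (diagonal a + vecMulVec w w) *ᵥ c = ∑ i, a i * c i ^ 2 + (w ⬝ᵥ c) ^ 2 := by
  rw [add_mulVec, dotProduct_add, vecMulVec_mulVec, dotProduct_comm w c]
  simp only [dotProduct, mulVec_diagonal, Pi.smul_apply, op_smul_eq_mul, sq, Finset.sum_mul]
  congr 1 <;> exact Finset.sum_congr rfl fun i _ => by ring

end Matrix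

section InnerProductSpace

variable {H : Type*} [NormedAddCommGroup H] [InnerProductSpace ℝ H]

lemma Orthonormal.norm_sum_smul_sq {κ : Type*} [Fintype κ] {w : κ → H} (hw : Orthonormal ℝ w)
    (c : κ → ℝ) : ‖∑ k, c k • w k‖ ^ 2 = ∑ k, c k ^ 2 := by
  rw [← real_inner_self_eq_norm_sq, hw.inner_sum]
  simp [sq]

namespace Submodule

lemma eq_inf_orthogonal_singleton_of_finrank_le {K K' : Submodule ℝ H} [FiniteDimensional ℝ K]
    (hle : K' ≤ K) {ω : H} (hωK : ω ∈ K) (hω : ω ≠ 0) (hperp : ∀ x ∈ K', ⟪ω, x⟫ = 0)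
    (hdim : Module.finrank ℝ K ≤ Module.finrank ℝ K' + 1) : K' = K ⊓ (ℝ ∙ ω)ᗮ := by
  have hle' : K' ≤ K ⊓ (ℝ ∙ ω)ᗮ := le_inf hle fun x hx =>
    mem_orthogonal_singleton_iff_inner_right.2 (hperp x hx)
  have hlt : K ⊓ (ℝ ∙ ω)ᗮ < K := by
    refine inf_le_left.lt_of_ne fun h => hω ?_
    have : ω ∈ K ⊓ (ℝ ∙ ω)ᗮ := by rw [h]; exact hωK
    exact inner_self_eq_zero.1 (mem_orthogonal_singleton_iff_inner_right.1 this.2)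
  have hfin := finrank_lt_finrank_of_lt hlt
  exact eq_of_le_of_finrank_le hle' (by omega)

variable {K : Submodule ℝ H} [FiniteDimensional ℝ K] {ω : H}

lemma starProjection_inf_orthogonal_singleton (hωK : ω ∈ K) (hω : ‖ω‖ = 1) (x : H) :
    (K ⊓ (ℝ ∙ ω)ᗮ).starProjection x = K.starProjection x - ⟪ω, x⟫ • ω := by
  have hωx : ⟪ω, K.starProjection x⟫ = ⟪ω, x⟫ := by
    rw [← inner_starProjection_left_eq_right, starProjection_eq_self_iff.2 hωK]
  refine eq_starProjection_of_mem_of_inner_eq_zero ⟨?_, ?_⟩ fun w hw => ?_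
  · exact sub_mem (K.starProjection_apply_mem x) (K.smul_mem _ hωK)
  · rw [SetLike.mem_coe, mem_orthogonal_singleton_iff_inner_right, inner_sub_right, hωx,
      real_inner_smul_right, real_inner_self_eq_norm_sq, hω]
    ring
  · rw [sub_sub_eq_add_sub, add_sub_right_comm, inner_add_left,
      starProjection_inner_eq_zero _ _ hw.1, real_inner_smul_left,
      mem_orthogonal_singleton_iff_inner_right.1 hw.2, mul_zero, add_zero]

lemma norm_sub_starProjection_inf_orthogonal_singleton_sq (hωK : ω ∈ K) (hω : ‖ω‖ = 1)
    (x : H) :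
    ‖x - (K ⊓ (ℝ ∙ ω)ᗮ).starProjection x‖ ^ 2
      = ‖x‖ ^ 2 - ‖K.starProjection x‖ ^ 2 + ⟪ω, x⟫ ^ 2 := by
  have hpyth := K.norm_sq_eq_add_norm_sq_starProjection x
  rw [starProjection_orthogonal_val] at hpyth
  rw [starProjection_inf_orthogonal_singleton hωK hω, sub_sub_eq_add_sub, add_sub_right_comm,
    norm_add_sq_real, real_inner_smul_right, starProjection_inner_eq_zero _ _ hωK, norm_smul, hω,
    mul_one, Real.norm_eq_abs, sq_abs]
  linarith

end Submodule

section PrincipalVectors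

variable {ι : Type*} [DecidableEq ι] {u v : ι → H} {σ : ι → ℝ}

lemma starProjection_span_principalVector (hv : Orthonormal ℝ v)
    (huv : ∀ i j, ⟪u i, v j⟫ = if i = j then σ i else 0)
    [(span ℝ (Set.range v)).HasOrthogonalProjection] (i : ι) :
    (span ℝ (Set.range v)).starProjection (u i) = σ i • v i := by
  refine eq_starProjection_of_mem_of_inner_eq_zero
    (smul_mem _ _ (subset_span ⟨i, rfl⟩)) fun w hw => ?_
  refine mem_orthogonal_singleton_iff_inner_right.1 (span_le.2 ?_ hw)
  rintro _ ⟨j, rfl⟩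
  rw [SetLike.mem_coe, mem_orthogonal_singleton_iff_inner_right, inner_sub_left,
    real_inner_smul_left, huv, orthonormal_iff_ite.1 hv]
  split_ifs <;> simp

lemma norm_sub_starProjection_principalVectors_sq {κ : Type*} [Fintype κ] [DecidableEq κ]
    (hu : Orthonormal ℝ u) (hv : Orthonormal ℝ v)
    (huv : ∀ i j, ⟪u i, v j⟫ = if i = j then σ i else 0)
    [FiniteDimensional ℝ (span ℝ (Set.range v))] {ω : H} (hωV : ω ∈ span ℝ (Set.range v))
    (hω : ‖ω‖ = 1) {e : κ → ι} (he : Function.Injective e) (c : κ → ℝ) :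
    ‖∑ k, c k • u (e k)
        - (span ℝ (Set.range v) ⊓ (ℝ ∙ ω)ᗮ).starProjection (∑ k, c k • u (e k))‖ ^ 2
      = c ⬝ᵥ (Matrix.diagonal (fun k => 1 - σ (e k) ^ 2)
          + Matrix.vecMulVec (fun k => σ (e k) * ⟪ω, v (e k)⟫) (fun k => σ (e k) * ⟪ω, v (e k)⟫))
            *ᵥ c := by
  set f := ∑ k, c k • u (e k)
  have hPf : (span ℝ (Set.range v)).starProjection f = ∑ k, (σ (e k) * c k) • v (e k) := by
    simp only [f, map_sum, map_smul, starProjection_span_principalVector hv huv, smul_smul,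
      mul_comm]
  have hωf : ⟪ω, f⟫ = ∑ k, σ (e k) * ⟪ω, v (e k)⟫ * c k := by
    have hωP : ⟪ω, f⟫ = ⟪ω, (span ℝ (Set.range v)).starProjection f⟫ := by
      rw [← inner_starProjection_left_eq_right, starProjection_eq_self_iff.2 hωV]
    rw [hωP, hPf, inner_sum]
    refine Finset.sum_congr rfl fun k _ => ?_
    rw [real_inner_smul_right]
    ring
  have hf : ‖f‖ ^ 2 = ∑ k, c k ^ 2 := (hu.comp e he).norm_sum_smul_sq c
  have hPf' : ‖∑ k, (σ (e k) * c k) • v (e k)‖ ^ 2 = ∑ k, (σ (e k) * c k) ^ 2 :=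
    (hv.comp e he).norm_sum_smul_sq _
  rw [norm_sub_starProjection_inf_orthogonal_singleton_sq hωV hω, hPf, hωf, hf, hPf',
    ← Finset.sum_sub_distrib, Matrix.dotProduct_diagonal_add_vecMulVec_mulVec]
  congr 1
  exact Finset.sum_congr rfl fun k _ => by ring

lemma setOf_norm_sub_starProjection_principalVectors_sq {κ : Type*} [Fintype κ]
    [DecidableEq κ]
    (hu : Orthonormal ℝ u) (hv : Orthonormal ℝ v)
    (huv : ∀ i j, ⟪u i, v j⟫ = if i = j then σ i else 0)
    [FiniteDimensional ℝ (span ℝ (Set.range v))] {ω : H} (hωV : ω ∈ span ℝ (Set.range v))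
    (hω : ‖ω‖ = 1) {e : κ → ι} (he : Function.Injective e) :
    {r : ℝ | ∃ f ∈ span ℝ (Set.range fun k => u (e k)), ‖f‖ = 1 ∧
        r = ‖f - (span ℝ (Set.range v) ⊓ (ℝ ∙ ω)ᗮ).starProjection f‖ ^ 2}
      = {r : ℝ | ∃ c : κ → ℝ, c ⬝ᵥ c = 1 ∧
          r = c ⬝ᵥ (Matrix.diagonal (fun k => 1 - σ (e k) ^ 2) + Matrix.vecMulVec
            (fun k => σ (e k) * ⟪ω, v (e k)⟫) (fun k => σ (e k) * ⟪ω, v (e k)⟫)) *ᵥ c} := by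
  have hnorm (c : κ → ℝ) : ‖∑ k, c k • u (e k)‖ = 1 ↔ c ⬝ᵥ c = 1 := by
    have hc : ‖∑ k, c k • u (e k)‖ ^ 2 = ∑ k, c k ^ 2 := (hu.comp e he).norm_sum_smul_sq c
    rw [← pow_eq_one_iff_of_nonneg (norm_nonneg _) two_ne_zero, hc]
    simp [dotProduct, sq]
  have hform (c : κ → ℝ) := norm_sub_starProjection_principalVectors_sq hu hv huv hωV hω he c
  ext r
  simp only [Set.mem_ofPred_eq, mem_span_range_iff_exists_fun]
  constructor
  · rintro ⟨_, ⟨c, rfl⟩, hf, rfl⟩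
    exact ⟨c, (hnorm c).1 hf, hform c⟩
  · rintro ⟨c, hc, rfl⟩
    exact ⟨_, ⟨c, rfl⟩, (hnorm c).2 hc, (hform c).symm⟩

end PrincipalVectors

end InnerProductSpace

theorem stmt_12_general {H : Type*} [NormedAddCommGroup H] [InnerProductSpace ℝ H] {s : ℕ}
    (u v : Fin s → H) (hu : Orthonormal ℝ u) (hv : Orthonormal ℝ v)
    (σ : Fin s → ℝ)
    (huv : ∀ i j, ⟪u i, v j⟫ = if i = j then σ i else 0)
    (V V' : Submodule ℝ H)
    (hV : V = Submodule.span ℝ (Set.range v))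
    (hV'le : V' ≤ V) [FiniteDimensional ℝ V']
    (hV'dim : Module.finrank ℝ V' = s - 1)
    (ω : H) (hωV : ω ∈ V) (hωnorm : ‖ω‖ = 1)
    (hωperp : ∀ x ∈ V', ⟪ω, x⟫ = 0)
    (d : Fin s → ℝ) (hd : ∀ i, d i = ⟪ω, v i⟫)
    (N₁ : Matrix (Fin (s - 1)) (Fin (s - 1)) ℝ)
    (hN₁ : ∀ α β, N₁ α β
      = (if α = β then 1 - σ (Fin.castLE (Nat.sub_le s 1) α) ^ 2 else 0)
        + σ (Fin.castLE (Nat.sub_le s 1) α) * d (Fin.castLE (Nat.sub_le s 1) α)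
          * (σ (Fin.castLE (Nat.sub_le s 1) β) * d (Fin.castLE (Nat.sub_le s 1) β)))
    (lamMax : ℝ)
    (hlam : IsGreatest {μ : ℝ | ∃ z : Fin (s - 1) → ℝ, z ≠ 0 ∧ N₁.mulVec z = μ • z} lamMax) :
    sSup {r : ℝ | ∃ f ∈ Submodule.span ℝ
          (Set.range fun α : Fin (s - 1) => u (Fin.castLE (Nat.sub_le s 1) α)),
        ‖f‖ = 1 ∧ r = ‖f - (V'.orthogonalProjectionOnto f : H)‖ ^ 2}
      = lamMax := by
  subst hV
  have : FiniteDimensional ℝ (span ℝ (Set.range v)) :=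
    FiniteDimensional.span_of_finite ℝ (Set.finite_range v)
  obtain rfl : V' = span ℝ (Set.range v) ⊓ (ℝ ∙ ω)ᗮ := by
    refine eq_inf_orthogonal_singleton_of_finrank_le hV'le hωV
      (norm_ne_zero_iff.1 (hωnorm ▸ one_ne_zero)) hωperp ?_
    rw [finrank_span_eq_card hv.linearIndependent, Fintype.card_fin]
    omega
  obtain rfl : d = fun i => ⟪ω, v i⟫ := funext hd
  set e : Fin (s - 1) → Fin s := Fin.castLE (Nat.sub_le s 1)
  set w : Fin (s - 1) → ℝ := fun α => σ (e α) * ⟪ω, v (e α)⟫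
  obtain rfl : N₁ = Matrix.diagonal (fun α => 1 - σ (e α) ^ 2) + Matrix.vecMulVec w w := by
    ext α β
    simp [hN₁, Matrix.diagonal_apply, Matrix.vecMulVec_apply, w]
  refine .trans ?_
    ((Matrix.isHermitian_diagonal_add_vecMulVec _ w).isGreatest_dotProduct_mulVec hlam).csSup_eq
  exact congrArg sSup <| setOf_norm_sub_starProjection_principalVectors_sq hu hv huv hωV hωnorm
    (Fin.castLE_injective _)

/-- In the setting of principal vectors `u₁,…,u_s`, `v₁,…,v_s`
(orthonormal with `⟨uᵢ, vⱼ⟩ = δ_ij σᵢ`, `σᵢ ∈ [0,1]`), with `V = span(v₁,…,v_s)`,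
`V' ⊂ V` of dimension `s − 1`, `ω ∈ V` a unit vector orthogonal to `V'`, `dᵢ = ⟨ω, vᵢ⟩`,
and `Ñ₁ ∈ ℝ^{(s−1)×(s−1)}` given by `(Ñ₁)_{αβ} = (1 − σ_α²) δ_{αβ} + σ_α d_α σ_β d_β`:
`sup { ‖f − P_{V'} f‖² : f ∈ span(u₁,…,u_{s−1}), ‖f‖ = 1 }` equals the largest eigenvalue
of `Ñ₁`. -/
theorem stmt_12 {H : Type*} [NormedAddCommGroup H] [InnerProductSpace ℝ H] {s : ℕ}
    (u v : Fin s → H) (hu : Orthonormal ℝ u) (hv : Orthonormal ℝ v)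
    (σ : Fin s → ℝ) (hσ : ∀ i, σ i ∈ Set.Icc (0 : ℝ) 1)
    (huv : ∀ i j, ⟪u i, v j⟫ = if i = j then σ i else 0)
    (V V' : Submodule ℝ H)
    (hV : V = Submodule.span ℝ (Set.range v))
    (hV'le : V' ≤ V) [FiniteDimensional ℝ V']
    (hV'dim : Module.finrank ℝ V' = s - 1)
    (ω : H) (hωV : ω ∈ V) (hωnorm : ‖ω‖ = 1)
    (hωperp : ∀ x ∈ V', ⟪ω, x⟫ = 0)
    (d : Fin s → ℝ) (hd : ∀ i, d i = ⟪ω, v i⟫)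
    (N₁ : Matrix (Fin (s - 1)) (Fin (s - 1)) ℝ)
    (hN₁ : ∀ α β, N₁ α β
      = (if α = β then 1 - σ (Fin.castLE (Nat.sub_le s 1) α) ^ 2 else 0)
        + σ (Fin.castLE (Nat.sub_le s 1) α) * d (Fin.castLE (Nat.sub_le s 1) α)
          * (σ (Fin.castLE (Nat.sub_le s 1) β) * d (Fin.castLE (Nat.sub_le s 1) β)))
    (lamMax : ℝ)
    (hlam : IsGreatest {μ : ℝ | ∃ z : Fin (s - 1) → ℝ, z ≠ 0 ∧ N₁.mulVec z = μ • z} lamMax) :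
    sSup {r : ℝ | ∃ f ∈ Submodule.span ℝ
          (Set.range fun α : Fin (s - 1) => u (Fin.castLE (Nat.sub_le s 1) α)),
        ‖f‖ = 1 ∧ r = ‖f - (V'.orthogonalProjectionOnto f : H)‖ ^ 2}
      = lamMax :=
  stmt_12_general u v hu hv σ huv V V' hV hV'le hV'dim ω hωV hωnorm hωperp d hd N₁ hN₁ lamMax hlam
end

section
/- Let H be a real inner product space, let u_1,…,u_s and v_1,…,v_s be orthonormal families in H, and let σ_1,…,σ_s ∈ [0,1] satisfy ⟨u_i, v_j⟩ = δ_ij σ_i for all i, j. Let V = span(v_1,…,v_s), let V' ⊂ V be a subspace with dim V' = s − 1, let ω ∈ V be a unit vector orthogonal to V', and write d_i = ⟨ω, v_i⟩. Let Ñ_1 ∈ ℝ^{(s−1)×(s−1)} be defined by (Ñ_1)_{αβ} = (1 − σ_α²) δ_{αβ} + σ_α d_α σ_β d_β. If z ∈ ℝ^{s−1} is a unit eigenvector of Ñ_1 with eigenvalue λ, then f := Σ_{α=1}^{s−1} z_α u_α is a unit vector in span(u_1,…,u_{s−1}) satisfying ‖P_{V'} f‖² = 1 − λ and ‖f − P_{V'}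 f‖² = λ. -/
open scoped RealInnerProductSpace InnerProductSpace

/-!
Since `⟪u α, v j⟫ = δ_{αj} σ α`, the projection of `f` onto `V` is `g = ∑ σ_α z_α v_α`.
As `V = V' ⊕ ℝ ω` orthogonally (dimension count), `P_{V'} f = g - ⟪ω, g⟫ ω`, whence
`‖P_{V'} f‖² = ∑ σ_α² z_α² - c²` with `c = ⟪ω, g⟫ = ∑ σ_α d_α z_α`. On the other hand
`Ñ₁ = diag(1 - σ_α²) + w wᵀ` with `w_α = σ_α d_α`, so `λ = zᵀ Ñ₁ z = ∑ (1 - σ_α²) z_α² + c²`,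
which is `1 - ‖P_{V'} f‖²`. Pythagoras gives `‖f - P_{V'} f‖² = ‖f‖² - ‖P_{V'} f‖² = λ`.
-/

open Submodule Module Matrix

section RCLike

variable {𝕜 E : Type*} [RCLike 𝕜] [NormedAddCommGroup E] [InnerProductSpace 𝕜 E]

theorem Submodule.IsOrtho.sup_eq_of_finrank_le {K L M : Submodule 𝕜 E} [FiniteDimensional 𝕜 M]
    (h : K ⟂ L) (hle : K ⊔ L ≤ M) (hdim : finrank 𝕜 M ≤ finrank 𝕜 K + finrank 𝕜 L) : K ⊔ L = M := by
  have : FiniteDimensional 𝕜 K := finiteDimensional_of_le (le_sup_left.trans hle)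
  have : FiniteDimensional 𝕜 L := finiteDimensional_of_le (le_sup_right.trans hle)
  have hrank := finrank_sup_add_finrank_inf_eq K L
  rw [h.disjoint.eq_bot, finrank_bot, add_zero] at hrank
  exact eq_of_le_of_finrank_le hle (by omega)

theorem Submodule.IsOrtho.starProjection_apply_of_sup_eq {K L M : Submodule 𝕜 E} (h : K ⟂ L)
    (hKL : K ⊔ L = M) [K.HasOrthogonalProjection] [L.HasOrthogonalProjection]
    [M.HasOrthogonalProjection] (x : E) :
    M.starProjection x = K.starProjection x + L.starProjection x := by
  subst hKL
  refine eq_starProjection_of_mem_of_inner_eq_zero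
    (add_mem_sup (K.starProjection_apply_mem x) (L.starProjection_apply_mem x)) ?_
  rintro _ hw
  obtain ⟨k, hk, l, hl, rfl⟩ := mem_sup.1 hw
  have hk' : ⟪x - K.starProjection x - L.starProjection x, k⟫_𝕜 = 0 := by
    rw [inner_sub_left, starProjection_inner_eq_zero x k hk,
      h.symm.inner_eq (L.starProjection_apply_mem x) hk, sub_zero]
  have hl' : ⟪x - K.starProjection x - L.starProjection x, l⟫_𝕜 = 0 := by
    rw [sub_right_comm, inner_sub_left, starProjection_inner_eq_zero x l hl,
      h.inner_eq (K.starProjection_apply_mem x) hl, sub_zero]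
  rw [sub_add_eq_sub_sub, inner_add_right, hk', hl', add_zero]

theorem Submodule.starProjection_eq_sub_of_finrank_le_add_one {V V' : Submodule 𝕜 E}
    [FiniteDimensional 𝕜 V] [V'.HasOrthogonalProjection] (hle : V' ≤ V) {ω : E} (hωV : ω ∈ V)
    (hω : ‖ω‖ = 1) (hωV' : ω ∈ V'ᗮ) (hdim : finrank 𝕜 V ≤ finrank 𝕜 V' + 1) (x : E) :
    V'.starProjection x = V.starProjection x - ⟪ω, V.starProjection x⟫_𝕜 • ω := by
  have hortho : V' ⟂ (𝕜 ∙ ω) := (isOrtho_iff_le.2 ((span_singleton_le_iff_mem ω _).2 hωV')).symm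
  have hsup : V' ⊔ (𝕜 ∙ ω) = V := by
    refine hortho.sup_eq_of_finrank_le (sup_le hle ((span_singleton_le_iff_mem ω V).2 hωV)) ?_
    rwa [finrank_span_singleton (by rintro rfl; simp at hω)]
  have hωx : ⟪ω, x⟫_𝕜 = ⟪ω, V.starProjection x⟫_𝕜 := by
    rw [← inner_starProjection_left_eq_right, V.starProjection_eq_self_iff.2 hωV]
  rw [eq_sub_iff_add_eq, ← hωx, ← starProjection_unit_singleton 𝕜 hω]
  exact (hortho.starProjection_apply_of_sup_eq hsup x).symm

theorem Submodule.norm_sub_starProjection_sq (K : Submodule 𝕜 E) [K.HasOrthogonalProjection]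
    (x : E) : ‖x - K.starProjection x‖ ^ 2 = ‖x‖ ^ 2 - ‖K.starProjection x‖ ^ 2 := by
  rw [K.norm_sq_eq_add_norm_sq_starProjection x, starProjection_orthogonal_val]
  ring

end RCLike

section Real

variable {H : Type*} [NormedAddCommGroup H] [InnerProductSpace ℝ H]

theorem norm_sub_inner_smul_sq {ω : H} (hω : ‖ω‖ = 1) (x : H) :
    ‖x - ⟪ω, x⟫ • ω‖ ^ 2 = ‖x‖ ^ 2 - ⟪ω, x⟫ ^ 2 := by
  rw [norm_sub_sq_real, real_inner_smul_right, norm_smul, hω, mul_one, Real.norm_eq_abs, sq_abs,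
    real_inner_comm x ω]
  ring

theorem Orthonormal.norm_sum_smul_sq_s13 {ι : Type*} [Fintype ι] {v : ι → H} (hv : Orthonormal ℝ v)
    (l : ι → ℝ) : ‖∑ i, l i • v i‖ ^ 2 = ∑ i, l i ^ 2 := by
  rw [← real_inner_self_eq_norm_sq, hv.inner_sum]
  simp [sq]

theorem starProjection_span_range_apply_of_inner_eq_ite {ι : Type*} [DecidableEq ι]
    {u v : ι → H} (hv : Orthonormal ℝ v) {σ : ι → ℝ}
    (huv : ∀ i j, ⟪u i, v j⟫ = if i = j then σ i else 0)
    [(span ℝ (Set.range v)).HasOrthogonalProjection] (i : ι) :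
    (span ℝ (Set.range v)).starProjection (u i) = σ i • v i := by
  refine eq_starProjection_of_mem_orthogonal (smul_mem _ _ (subset_span ⟨i, rfl⟩)) ?_
  rw [← span_singleton_le_iff_mem, ← isOrtho_iff_le, isOrtho_span]
  rintro _ rfl _ ⟨j, rfl⟩
  rw [inner_sub_left, inner_smul_left, huv, orthonormal_iff_ite.1 hv]
  split_ifs <;> simp

theorem starProjection_span_range_sum_smul_of_inner_eq_ite {ι κ : Type*} [DecidableEq ι]
    [Fintype κ] {u v : ι → H} (hv : Orthonormal ℝ v) {σ : ι → ℝ}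
    (huv : ∀ i j, ⟪u i, v j⟫ = if i = j then σ i else 0)
    [(span ℝ (Set.range v)).HasOrthogonalProjection] (e : κ → ι) (z : κ → ℝ) :
    (span ℝ (Set.range v)).starProjection (∑ α, z α • u (e α)) =
      ∑ α, (σ (e α) * z α) • v (e α) := by
  simp only [map_sum, map_smul, starProjection_span_range_apply_of_inner_eq_ite hv huv, smul_smul]
  exact Finset.sum_congr rfl fun α _ => by rw [mul_comm]

end Real

theorem Matrix.eq_of_diagonal_add_vecMulVec_mulVec_eq_smul {ι R : Type*} [Fintype ι]
    [DecidableEq ι] [CommRing R] {a w z : ι → R} {lam : R}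
    (heig : (diagonal a + vecMulVec w w) *ᵥ z = lam • z) (hz : z ⬝ᵥ z = 1) :
    lam = ∑ i, a i * z i ^ 2 + (w ⬝ᵥ z) ^ 2 := calc
  lam = z ⬝ᵥ (lam • z) := by rw [dotProduct_smul, hz, smul_eq_mul, mul_one]
  _ = z ⬝ᵥ (diagonal a *ᵥ z) + z ⬝ᵥ (vecMulVec w w *ᵥ z) := by
    rw [← heig, add_mulVec, dotProduct_add]
  _ = ∑ i, a i * z i ^ 2 + (w ⬝ᵥ z) ^ 2 := by
    rw [vecMulVec_mulVec, op_smul_eq_smul, dotProduct_smul, smul_eq_mul, dotProduct_comm z w,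
      sq (w ⬝ᵥ z)]
    congr 1
    exact Finset.sum_congr rfl fun i _ => by rw [mulVec_diagonal]; ring

theorem stmt_13_general {H : Type*} [NormedAddCommGroup H] [InnerProductSpace ℝ H] {s : ℕ}
    (u v : Fin s → H) (hu : Orthonormal ℝ u) (hv : Orthonormal ℝ v)
    (σ : Fin s → ℝ)
    (huv : ∀ i j, ⟪u i, v j⟫ = if i = j then σ i else 0)
    (V V' : Submodule ℝ H)
    (hV : V = Submodule.span ℝ (Set.range v))
    (hV'le : V' ≤ V) [FiniteDimensional ℝ V']
    (hV'dim : Module.finrank ℝ V' = s - 1)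
    (ω : H) (hωV : ω ∈ V) (hωnorm : ‖ω‖ = 1)
    (hωperp : ∀ x ∈ V', ⟪ω, x⟫ = 0)
    (d : Fin s → ℝ) (hd : ∀ i, d i = ⟪ω, v i⟫)
    (N₁ : Matrix (Fin (s - 1)) (Fin (s - 1)) ℝ)
    (hN₁ : ∀ α β, N₁ α β
      = (if α = β then 1 - σ (Fin.castLE (Nat.sub_le s 1) α) ^ 2 else 0)
        + σ (Fin.castLE (Nat.sub_le s 1) α) * d (Fin.castLE (Nat.sub_le s 1) α)
          * (σ (Fin.castLE (Nat.sub_le s 1) β) * d (Fin.castLE (Nat.sub_le s 1) β)))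
    (z : Fin (s - 1) → ℝ) (lam : ℝ)
    (hznorm : ∑ α, z α ^ 2 = 1)
    (heig : N₁.mulVec z = lam • z) :
    -- f = Σ_α z_α u_α
    let f : H := ∑ α : Fin (s - 1), z α • u (Fin.castLE (Nat.sub_le s 1) α)
    f ∈ Submodule.span ℝ
        (Set.range fun α : Fin (s - 1) => u (Fin.castLE (Nat.sub_le s 1) α)) ∧
    ‖f‖ = 1 ∧
    ‖(V'.orthogonalProjection f : H)‖ ^ 2 = 1 - lam ∧
    ‖f - (V'.orthogonalProjection f : H)‖ ^ 2 = lam := by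
  intro f
  set e : Fin (s - 1) → Fin s := Fin.castLE (Nat.sub_le s 1)
  have he : Function.Injective e := Fin.castLE_injective _
  set g : H := ∑ α, (σ (e α) * z α) • v (e α)
  set c : ℝ := ∑ α, σ (e α) * d (e α) * z α
  have : FiniteDimensional ℝ V := hV ▸ FiniteDimensional.span_of_finite ℝ (Set.finite_range v)
  have hPV : V.starProjection f = g := by
    subst hV; exact starProjection_span_range_sum_smul_of_inner_eq_ite hv huv e z
  have hωg : ⟪ω, g⟫ = c := by
    simp only [g, c, inner_sum, real_inner_smul_right, hd]
    exact Finset.sum_congr rfl fun α _ => by ring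
  have hP : V'.starProjection f = g - c • ω := by
    rw [starProjection_eq_sub_of_finrank_le_add_one hV'le hωV hωnorm
      ((mem_orthogonal' _ _).2 hωperp), hPV, hωg]
    rw [hV'dim, hV, finrank_span_eq_card hv.linearIndependent, Fintype.card_fin]
    omega
  have hN : N₁ = diagonal (fun α => 1 - σ (e α) ^ 2) +
      vecMulVec (fun α => σ (e α) * d (e α)) (fun α => σ (e α) * d (e α)) := by
    ext α β
    simp [hN₁, diagonal_apply, vecMulVec_apply]
  have hlam : lam = ∑ α, (1 - σ (e α) ^ 2) * z α ^ 2 + c ^ 2 :=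
    eq_of_diagonal_add_vecMulVec_mulVec_eq_smul (hN ▸ heig) (by simpa [dotProduct, sq] using hznorm)
  have hf : ‖f‖ ^ 2 = 1 := hznorm ▸ (hu.comp e he).norm_sum_smul_sq_s13 z
  have hPf : ‖V'.starProjection f‖ ^ 2 = 1 - lam := by
    have hg : ‖g‖ ^ 2 = ∑ α, (σ (e α) * z α) ^ 2 := (hv.comp e he).norm_sum_smul_sq_s13 _
    have hsplit : ∑ α, (σ (e α) * z α) ^ 2 + ∑ α, (1 - σ (e α) ^ 2) * z α ^ 2 = ∑ α, z α ^ 2 := by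
      rw [← Finset.sum_add_distrib]
      exact Finset.sum_congr rfl fun α _ => by ring
    rw [hP, ← hωg, norm_sub_inner_smul_sq hωnorm, hg, hωg]
    linarith
  refine ⟨sum_mem fun α _ => smul_mem _ _ (subset_span ⟨α, rfl⟩),
    (pow_eq_one_iff_of_nonneg (norm_nonneg f) two_ne_zero).1 hf, hPf, ?_⟩
  show ‖f - V'.starProjection f‖ ^ 2 = lam
  rw [V'.norm_sub_starProjection_sq, hf, hPf]
  ring

/-- In the setting of principal vectors `u₁,…,u_s`, `v₁,…,v_s`
(orthonormal with `⟨uᵢ, vⱼ⟩ = δ_ij σᵢ`, `σᵢ ∈ [0,1]`), with `V = span(v₁,…,v_s)`,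
`V' ⊂ V` of dimension `s − 1`, `ω ∈ V` a unit vector orthogonal to `V'`, `dᵢ = ⟨ω, vᵢ⟩`,
and `Ñ₁` given by `(Ñ₁)_{αβ} = (1 − σ_α²) δ_{αβ} + σ_α d_α σ_β d_β`: if `z ∈ ℝ^{s−1}` is a
unit eigenvector of `Ñ₁` with eigenvalue `λ`, then `f = Σ_α z_α u_α` is a unit vector in
`span(u₁,…,u_{s−1})` with `‖P_{V'} f‖² = 1 − λ` and `‖f − P_{V'} f‖² = λ`. -/
theorem stmt_13 {H : Type*} [NormedAddCommGroup H] [InnerProductSpace ℝ H] {s : ℕ}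
    (u v : Fin s → H) (hu : Orthonormal ℝ u) (hv : Orthonormal ℝ v)
    (σ : Fin s → ℝ) (hσ : ∀ i, σ i ∈ Set.Icc (0 : ℝ) 1)
    (huv : ∀ i j, ⟪u i, v j⟫ = if i = j then σ i else 0)
    (V V' : Submodule ℝ H)
    (hV : V = Submodule.span ℝ (Set.range v))
    (hV'le : V' ≤ V) [FiniteDimensional ℝ V']
    (hV'dim : Module.finrank ℝ V' = s - 1)
    (ω : H) (hωV : ω ∈ V) (hωnorm : ‖ω‖ = 1)
    (hωperp : ∀ x ∈ V', ⟪ω, x⟫ = 0)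
    (d : Fin s → ℝ) (hd : ∀ i, d i = ⟪ω, v i⟫)
    (N₁ : Matrix (Fin (s - 1)) (Fin (s - 1)) ℝ)
    (hN₁ : ∀ α β, N₁ α β
      = (if α = β then 1 - σ (Fin.castLE (Nat.sub_le s 1) α) ^ 2 else 0)
        + σ (Fin.castLE (Nat.sub_le s 1) α) * d (Fin.castLE (Nat.sub_le s 1) α)
          * (σ (Fin.castLE (Nat.sub_le s 1) β) * d (Fin.castLE (Nat.sub_le s 1) β)))
    (z : Fin (s - 1) → ℝ) (lam : ℝ)
    (hznorm : ∑ α, z α ^ 2 = 1)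
    (heig : N₁.mulVec z = lam • z) :
    -- f = Σ_α z_α u_α
    let f : H := ∑ α : Fin (s - 1), z α • u (Fin.castLE (Nat.sub_le s 1) α)
    f ∈ Submodule.span ℝ
        (Set.range fun α : Fin (s - 1) => u (Fin.castLE (Nat.sub_le s 1) α)) ∧
    ‖f‖ = 1 ∧
    ‖(V'.orthogonalProjection f : H)‖ ^ 2 = 1 - lam ∧
    ‖f - (V'.orthogonalProjection f : H)‖ ^ 2 = lam :=
  stmt_13_general u v hu hv σ huv V V' hV hV'le hV'dim ω hωV hωnorm hωperp d hd N₁ hN₁ z lam hznorm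
    heig
end
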